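/- In the setting of the previous statement, the coefficient m_{N-2-r} of z^{N-2-r} in sum(adj(I - A·z)·A) equals -N·d_{N-1-r} if s > r, and equals -N·d_{N-1-r} + k_{N-1-r} if s = r. -/

import Mathlib

open Polynomial Matrix

/-- The sum of all the entries of a matrix. -/
def sumEntries {R : Type*} [AddCommMonoid R] {N : ℕ} (M : Matrix (Fin N) (Fin N) R) : R :=
  ∑ i, ∑ j, M i j

/-- `det(I - A·z)`. -/
noncomputable def detIsubAz {N : ℕ} (A : Matrix (Fin N) (Fin N) ℚ) : ℚ[X] :=
  ((1 : Matrix (Fin N) (Fin N) ℚ[X]) - (X : ℚ[X]) • A.map C).det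

/-- `sum(adj(I - A·z))`. -/
noncomputable def sumAdjIsubAz {N : ℕ} (A : Matrix (Fin N) (Fin N) ℚ) : ℚ[X] :=
  sumEntries (adjugate ((1 : Matrix (Fin N) (Fin N) ℚ[X]) - (X : ℚ[X]) • A.map C))

/-- `sum(adj(I - A·z)·A)`. -/
noncomputable def sumAdjIsubAzA {N : ℕ} (A : Matrix (Fin N) (Fin N) ℚ) : ℚ[X] :=
  sumEntries (adjugate ((1 : Matrix (Fin N) (Fin N) ℚ[X]) - (X : ℚ[X]) • A.map C) * A.map C)

section sumEntries

variable {R : Type*} {N : ℕ}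

lemma sumEntries_sub [AddCommGroup R] (M M' : Matrix (Fin N) (Fin N) R) :
    sumEntries (M - M') = sumEntries M - sumEntries M' := by
  simp only [sumEntries, Matrix.sub_apply, Finset.sum_sub_distrib]

lemma sumEntries_smul [Semiring R] (a : R) (M : Matrix (Fin N) (Fin N) R) :
    sumEntries (a • M) = a * sumEntries M := by
  simp only [sumEntries, Matrix.smul_apply, smul_eq_mul, Finset.mul_sum]

lemma sumEntries_smul_one [CommSemiring R] (a : R) :
    sumEntries (a • (1 : Matrix (Fin N) (Fin N) R)) = N * a := by
  simp [sumEntries, one_apply, mul_comm]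

end sumEntries

lemma adjugate_mul_one_sub {n R : Type*} [Fintype n] [DecidableEq n] [CommRing R]
    (M : Matrix n n R) : adjugate M * (1 - M) = adjugate M - M.det • 1 := by
  rw [Matrix.mul_sub, Matrix.mul_one, adjugate_mul]

/-- Summing the entries of `adj(I - A·z)·(A·z) = adj(I - A·z) - det(I - A·z)·I`. -/
lemma X_mul_sumAdjIsubAzA {N : ℕ} (A : Matrix (Fin N) (Fin N) ℚ) :
    X * sumAdjIsubAzA A = sumAdjIsubAz A - (N : ℚ[X]) * detIsubAz A := by
  set M := (1 : Matrix (Fin N) (Fin N) ℚ[X]) - (X : ℚ[X]) • A.map C with hM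
  have hXA : (X : ℚ[X]) • A.map C = 1 - M := by rw [hM, sub_sub_cancel]
  calc X * sumAdjIsubAzA A = sumEntries (adjugate M * ((X : ℚ[X]) • A.map C)) := by
        rw [Matrix.mul_smul, sumEntries_smul]; rfl
    _ = sumEntries (adjugate M - M.det • 1) := by rw [hXA, adjugate_mul_one_sub]
    _ = sumAdjIsubAz A - (N : ℚ[X]) * detIsubAz A := by
        rw [sumEntries_sub, sumEntries_smul_one]; rfl

lemma coeff_sumAdjIsubAzA {N : ℕ} (A : Matrix (Fin N) (Fin N) ℚ) (j : ℕ) :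
    (sumAdjIsubAzA A).coeff j
      = (sumAdjIsubAz A).coeff (j + 1) - N * (detIsubAz A).coeff (j + 1) := by
  rw [← coeff_X_mul, X_mul_sumAdjIsubAzA, coeff_sub, ← C_eq_natCast, coeff_C_mul]

theorem stmt10_general {N : ℕ} (A : Matrix (Fin N) (Fin N) ℚ) (r s : ℕ)
    (hr : r + 2 ≤ N)
    (hadj : (sumAdjIsubAz A).natDegree = N - 1 - s) :
    (r < s →
        (sumAdjIsubAzA A).coeff (N - 2 - r) = - (N : ℚ) * (detIsubAz A).coeff (N - 1 - r)) ∧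
      (s = r →
        (sumAdjIsubAzA A).coeff (N - 2 - r)
          = - (N : ℚ) * (detIsubAz A).coeff (N - 1 - r) + (sumAdjIsubAz A).coeff (N - 1 - r)) := by
  have hsucc : N - 1 - r = N - 2 - r + 1 := by omega
  rw [coeff_sumAdjIsubAzA, hsucc]
  refine ⟨fun hlt => ?_, fun _ => by ring⟩
  rw [coeff_eq_zero_of_natDegree_lt (by omega)]
  ring

/-- If `deg det(I - A·z) = N - r` and `deg sum(adj(I - A·z)) = N - 1 - s` with `s ≥ r`, then
`m_{N-2-r} = -N·d_{N-1-r}` if `s > r`, and `m_{N-2-r} = -N·d_{N-1-r} + k_{N-1-r}` if `s = r`. -/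
theorem stmt10 {N : ℕ} (A : Matrix (Fin N) (Fin N) ℚ) (r s : ℕ)
    (hr : r + 2 ≤ N) (hs : s ≤ N - 1) (hrs : r ≤ s)
    (hdet : (detIsubAz A).natDegree = N - r)
    (hadj : (sumAdjIsubAz A).natDegree = N - 1 - s) (hadj0 : sumAdjIsubAz A ≠ 0) :
    (r < s →
        (sumAdjIsubAzA A).coeff (N - 2 - r) = - (N : ℚ) * (detIsubAz A).coeff (N - 1 - r)) ∧
      (s = r →
        (sumAdjIsubAzA A).coeff (N - 2 - r)
          = - (N : ℚ) * (detIsubAz A).coeff (N - 1 - r) + (sumAdjIsubAz A).coeff (N - 1 - r)) :=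
  stmt10_general A r s hr hadj
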